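/- arXiv:0705.3677 — 3 statements merged into one kernel-verified Lean document; each statement's English description precedes it below -/
import Mathlib

section
/- Let 1 ≤ K ≤ N, let F be the N×N DFT matrix with [F]_{l,n} = (1/√N) e^{−j2π(l−1)(n−1)/N}, and let P_i (i = 1,…,K) be the cyclic shift permutation matrix shifting entries up by i−1 positions. Let Δx ∈ ℂ^N be such that (FΔx)_k ≠ 0 for all k ∈ {1,…,N}. Then the N×K matrix Φ(Δx) = [P_1Δx P_2Δx ⋯ P_KΔx] has rank K. -/
open Matrix

noncomputable def cyclicShiftMatrix (N i : ℕ) : Matrix (Fin N) (Fin N) ℂ :=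
  Matrix.of fun k l =>
    if ((l : ℕ) : ZMod N) = ((k : ℕ) : ZMod N) + ((i - 1 : ℕ) : ZMod N) then 1 else 0

noncomputable def dftMatrix (N : ℕ) : Matrix (Fin N) (Fin N) ℂ :=
  Matrix.of fun l n =>
    (1 / (Real.sqrt N : ℂ)) *
      Complex.exp (-(2 * Real.pi * Complex.I * (l : ℕ) * (n : ℕ)) / N)

lemma zeta_zpow_congr (N : ℕ) (hN : N ≠ 0) (a b : ℤ) (h : (N : ℤ) ∣ (a - b)) :
    Complex.exp (2 * Real.pi * Complex.I / N) ^ a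
      = Complex.exp (2 * Real.pi * Complex.I / N) ^ b := by
  obtain ⟨t, ht⟩ := h
  have hroot : Complex.exp (2 * Real.pi * Complex.I / N) ^ (N : ℤ) = 1 := by
    rw [zpow_natCast, (Complex.isPrimitiveRoot_exp N hN).pow_eq_one]
  have hab : a = b + N * t := by linarith
  rw [hab, zpow_add₀ (Complex.exp_ne_zero _), _root_.zpow_mul, hroot, _root_.one_zpow, mul_one]

lemma dft_entry (N : ℕ) (hN : N ≠ 0) (a b : ℕ) :
    Complex.exp (-(2 * Real.pi * Complex.I * a * b) / N)
      = Complex.exp (2 * Real.pi * Complex.I / N) ^ (-(a * b : ℤ)) := by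
  rw [← Complex.exp_int_mul]
  congr 1
  push_cast
  ring

theorem stmt4 (N K : ℕ) (hK : 1 ≤ K) (hKN : K ≤ N) (Δx : Fin N → ℂ)
    (hΔx : ∀ k : Fin N, (dftMatrix N *ᵥ Δx) k ≠ 0) :
    (Matrix.of fun (n : Fin N) (i : Fin K) =>
        (cyclicShiftMatrix N ((i : ℕ) + 1) *ᵥ Δx) n).rank = K := by
  have hN : N ≠ 0 := by omega
  have hNpos : 0 < N := Nat.pos_of_ne_zero hN
  haveI : NeZero N := ⟨hN⟩
  set ζ : ℂ := Complex.exp (2 * Real.pi * Complex.I / N) with hζ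
  set M : Matrix (Fin N) (Fin K) ℂ := Matrix.of fun (n : Fin N) (i : Fin K) =>
      (cyclicShiftMatrix N ((i : ℕ) + 1) *ᵥ Δx) n with hM
  -- columns of M pointwise
  have hcol : ∀ (k : Fin N) (i : Fin K),
      M k i = Δx ⟨((k : ℕ) + (i : ℕ)) % N, Nat.mod_lt _ hNpos⟩ := by
    intro k i
    have hiff : ∀ m : Fin N,
        (((m : ℕ) : ZMod N) = ((k : ℕ) : ZMod N) + (((i : ℕ) + 1 - 1 : ℕ) : ZMod N))
          ↔ m = ⟨((k : ℕ) + (i : ℕ)) % N, Nat.mod_lt _ hNpos⟩ := by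
      intro m
      rw [Nat.add_sub_cancel]
      constructor
      · intro h
        have h2 : ((m : ℕ) : ZMod N) = ((((k : ℕ) + (i : ℕ)) % N : ℕ) : ZMod N) := by
          rw [ZMod.natCast_mod]; push_cast; exact h
        have h3 := congrArg ZMod.val h2
        rw [ZMod.val_natCast_of_lt m.isLt,
          ZMod.val_natCast_of_lt (Nat.mod_lt _ hNpos)] at h3
        exact Fin.ext h3
      · intro h
        subst h
        simp only
        rw [ZMod.natCast_mod]; push_cast; ring
    show (cyclicShiftMatrix N ((i : ℕ) + 1) *ᵥ Δx) k = _
    simp only [Matrix.mulVec, dotProduct, cyclicShiftMatrix, Matrix.of_apply]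
    rw [Finset.sum_congr rfl (fun m _ => by rw [if_congr (hiff m) rfl rfl])]
    simp [ite_mul, Finset.sum_ite_eq']
  -- key: DFT of each column
  have key : ∀ (l : Fin N) (i : Fin K),
      (∑ k : Fin N, dftMatrix N l k * M k i)
        = (ζ ^ (l : ℕ)) ^ (i : ℕ) * (dftMatrix N *ᵥ Δx) l := by
    intro l i
    have hi' : (i : ℕ) < N := lt_of_lt_of_le i.isLt hKN
    set i' : Fin N := ⟨(i : ℕ), hi'⟩ with hi'def
    have hbij : Function.Bijective (fun k : Fin N => k + i') :=
      (Equiv.addRight i').bijective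
    rw [Matrix.mulVec, show (dotProduct (fun n => dftMatrix N l n) Δx)
        = ∑ m : Fin N, dftMatrix N l m * Δx m from rfl, Finset.mul_sum,
      ← Function.Bijective.sum_comp hbij
        (fun m => (ζ ^ (l : ℕ)) ^ (i : ℕ) * (dftMatrix N l m * Δx m))]
    apply Finset.sum_congr rfl
    intro k _
    have hval : ((k + i' : Fin N) : ℕ) = ((k : ℕ) + (i : ℕ)) % N := by
      rw [Fin.val_add]
    rw [hcol k i]
    have hfin : (⟨((k : ℕ) + (i : ℕ)) % N, Nat.mod_lt _ hNpos⟩ : Fin N) = k + i' := by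
      apply Fin.ext; rw [hval]
    rw [hfin]
    simp only [dftMatrix, Matrix.of_apply]
    rw [dft_entry N hN, dft_entry N hN, hval]
    have hpow : (ζ ^ (l : ℕ)) ^ (i : ℕ) = ζ ^ (((l : ℕ) * (i : ℕ) : ℕ) : ℤ) := by
      rw [zpow_natCast, pow_mul]
    rw [hpow, ← hζ]
    have hmod : ζ ^ (-((l : ℕ) * (k : ℕ) : ℤ))
        = ζ ^ (((l : ℕ) * (i : ℕ) : ℕ) : ℤ)
          * ζ ^ (-((l : ℕ) * (((k : ℕ) + (i : ℕ)) % N : ℕ) : ℤ)) := by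
      rw [← zpow_add₀ (Complex.exp_ne_zero _)]
      apply zeta_zpow_congr N hN
      have h := Nat.mod_add_div ((k : ℕ) + (i : ℕ)) N
      have h' : ((((k : ℕ) + (i : ℕ)) % N : ℕ) : ℤ)
          + (N : ℤ) * ((((k : ℕ) + (i : ℕ)) / N : ℕ) : ℤ)
          = ((k : ℕ) : ℤ) + ((i : ℕ) : ℤ) := by exact_mod_cast congrArg (Nat.cast : ℕ → ℤ) h
      refine ⟨-((l : ℕ) * ((((k : ℕ) + (i : ℕ)) / N : ℕ) : ℤ)), ?_⟩
      push_cast at h' ⊢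
      linear_combination ((l : ℕ) : ℤ) * h'
    rw [hmod]
    ring
  -- injectivity of mulVecLin
  have hinj : Function.Injective M.mulVecLin := by
    rw [← LinearMap.ker_eq_bot, LinearMap.ker_eq_bot']
    intro c hc
    have hc' : M *ᵥ c = 0 := hc
    have hsum : ∀ l : Fin N, (∑ i : Fin K, c i * (ζ ^ (l : ℕ)) ^ (i : ℕ)) = 0 := by
      intro l
      have h1 : (dftMatrix N *ᵥ (M *ᵥ c)) l = 0 := by rw [hc']; simp
      have h2 : (dftMatrix N *ᵥ (M *ᵥ c)) l
          = (∑ i : Fin K, c i * (ζ ^ (l : ℕ)) ^ (i : ℕ)) * (dftMatrix N *ᵥ Δx) l := by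
        show (∑ k : Fin N, dftMatrix N l k * (∑ i : Fin K, M k i * c i)) = _
        calc ∑ k : Fin N, dftMatrix N l k * (∑ i : Fin K, M k i * c i)
            = ∑ k : Fin N, ∑ i : Fin K, dftMatrix N l k * M k i * c i := by
              refine Finset.sum_congr rfl fun k _ => ?_
              rw [Finset.mul_sum]
              exact Finset.sum_congr rfl fun i _ => by ring
          _ = ∑ i : Fin K, ∑ k : Fin N, dftMatrix N l k * M k i * c i := Finset.sum_comm
          _ = ∑ i : Fin K, (∑ k : Fin N, dftMatrix N l k * M k i) * c i := by
              refine Finset.sum_congr rfl fun i _ => (Finset.sum_mul _ _ _).symm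
          _ = ∑ i : Fin K, ((ζ ^ (l : ℕ)) ^ (i : ℕ) * (dftMatrix N *ᵥ Δx) l) * c i := by
              refine Finset.sum_congr rfl fun i _ => by rw [key l i]
          _ = (∑ i : Fin K, c i * (ζ ^ (l : ℕ)) ^ (i : ℕ)) * (dftMatrix N *ᵥ Δx) l := by
              rw [Finset.sum_mul]
              exact Finset.sum_congr rfl fun i _ => by ring
      rw [h2] at h1
      rcases mul_eq_zero.mp h1 with h | h
      · exact h
      · exact absurd h (hΔx l)
    have hvdm : (Matrix.vandermonde (fun j : Fin K => ζ ^ (j : ℕ))) *ᵥ c = 0 := by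
      funext j
      show (∑ i : Fin K, Matrix.vandermonde (fun j : Fin K => ζ ^ (j : ℕ)) j i * c i) = 0
      have hs := hsum (Fin.castLE hKN j)
      simp only [Fin.coe_castLE] at hs
      rw [← hs]
      exact Finset.sum_congr rfl fun i _ => by simp only [Matrix.vandermonde, Matrix.of_apply]; ring
    have hdet : (Matrix.vandermonde fun j : Fin K => ζ ^ (j : ℕ)).det ≠ 0 := by
      rw [Matrix.det_vandermonde_ne_zero_iff]
      intro a b hab
      exact Fin.ext ((Complex.isPrimitiveRoot_exp N hN).pow_inj
        (lt_of_lt_of_le a.isLt hKN) (lt_of_lt_of_le b.isLt hKN) hab)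
    exact Matrix.eq_zero_of_mulVec_eq_zero hdet hvdm
  have hrank : M.rank = Module.finrank ℂ (LinearMap.range M.mulVecLin) := rfl
  rw [hrank, LinearMap.finrank_range_of_inj hinj, Module.finrank_fin_fun]
end

section
/- Let X and Y be independent random variables, each exponentially distributed with rate 1, and let α > 0. Then lim_{ρ→∞} log ℙ[XY ≤ ρ^{−α}] / log ρ = −α. Equivalently, the exponential order of the probability that the product XY falls below ρ^{−α} equals −α. -/
/-!
For small `t`, `ℙ[XY ≤ t]` is squeezed between two powers of `t`. From below, the event
contains the square `X, Y ≤ √t`, of probability `(1 - e^{-√t})² ≥ t / 4`. From above,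
conditioning on `X` gives `ℙ[XY ≤ t] = 𝔼[1 - e^{-t/X}] ≤ t^δ 𝔼[X^{-δ}] = t^δ Γ(1 - δ)` for every
`δ < 1`, using `1 - e^{-u} ≤ u^δ`. With `t = ρ^{-α}` the exponential order is therefore at least
`-α` and at most `-δα` for every `δ < 1`.
-/

open MeasureTheory ProbabilityTheory Filter

open Set Real Topology

lemma half_le_one_sub_exp_neg {s : ℝ} (hs0 : 0 ≤ s) (hs1 : s ≤ 1) : s / 2 ≤ 1 - exp (-s) := by
  have hexp : exp (-s) ≤ (1 + s)⁻¹ := by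
    rw [exp_neg]
    exact inv_anti₀ (by positivity) (by linarith [add_one_le_exp s])
  have : (1 + s)⁻¹ ≤ 1 - s / 2 := by
    rw [inv_le_iff_one_le_mul₀' (by positivity)]
    nlinarith
  linarith

lemma one_sub_exp_neg_le_rpow {u δ : ℝ} (hu : 0 < u) (hδ0 : 0 ≤ δ) (hδ1 : δ ≤ 1) :
    1 - exp (-u) ≤ u ^ δ := by
  rcases le_or_gt u 1 with h | h
  · calc 1 - exp (-u) ≤ u := by linarith [add_one_le_exp (-u)]
      _ = u ^ (1 : ℝ) := (rpow_one u).symm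
      _ ≤ u ^ δ := rpow_le_rpow_of_exponent_ge hu h hδ1
  · linarith [exp_pos (-u), one_le_rpow h.le hδ0]

namespace ProbabilityTheory

lemma expMeasure_Iic {r s : ℝ} (hr : 0 < r) (hs : 0 ≤ s) :
    expMeasure r (Iic s) = ENNReal.ofReal (1 - exp (-(r * s))) := by
  have := isProbabilityMeasure_expMeasure hr
  rw [← ofReal_cdf, cdf_expMeasure_eq hr, if_pos hs]

lemma expMeasure_Iic_zero {r : ℝ} (hr : 0 < r) : expMeasure r (Iic 0) = 0 := by
  simp [expMeasure_Iic hr le_rfl]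

lemma ae_pos_expMeasure {r : ℝ} (hr : 0 < r) : ∀ᵐ x ∂expMeasure r, 0 < x := by
  simpa [ae_iff, not_lt, Iic] using expMeasure_Iic_zero hr

lemma expMeasure_Icc {r s : ℝ} (hr : 0 < r) (hs : 0 ≤ s) :
    expMeasure r (Icc 0 s) = ENNReal.ofReal (1 - exp (-(r * s))) := by
  rw [← Iic_inter_Ici, measure_inter_conull, expMeasure_Iic hr hs]
  exact measure_mono_null (by simp) (expMeasure_Iic_zero hr)

lemma div_four_le_expMeasure_prod_real_mul_le {t : ℝ} (ht0 : 0 < t) (ht1 : t ≤ 1) :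
    t / 4 ≤ ((expMeasure 1).prod (expMeasure 1)).real {p : ℝ × ℝ | p.1 * p.2 ≤ t} := by
  have := isProbabilityMeasure_expMeasure one_pos
  set s := √t
  have hs0 : 0 ≤ s := sqrt_nonneg t
  have hsquare : Icc 0 s ×ˢ Icc 0 s ⊆ {p : ℝ × ℝ | p.1 * p.2 ≤ t} := by
    rintro ⟨x, y⟩ ⟨⟨hx0, hxs⟩, ⟨hy0, hys⟩⟩
    calc x * y ≤ s * s := mul_le_mul hxs hys hy0 hs0
      _ = t := mul_self_sqrt ht0.le
  have hside : s / 2 ≤ 1 - exp (-s) := half_le_one_sub_exp_neg hs0 (sqrt_le_one.mpr ht1)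
  calc t / 4 = (s / 2) * (s / 2) := by rw [div_mul_div_comm, mul_self_sqrt ht0.le]; norm_num
    _ ≤ (1 - exp (-s)) * (1 - exp (-s)) := mul_self_le_mul_self (by positivity) hside
    _ = ((expMeasure 1).prod (expMeasure 1)).real (Icc 0 s ×ˢ Icc 0 s) := by
      rw [measureReal_def, Measure.prod_prod, expMeasure_Icc one_pos hs0, one_mul,
        ENNReal.toReal_mul, ENNReal.toReal_ofReal (by linarith)]
    _ ≤ _ := measureReal_mono hsquare

lemma lintegral_rpow_expMeasure_one {s : ℝ} (hs : 0 < s) :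
    ∫⁻ x, ENNReal.ofReal (x ^ (s - 1)) ∂expMeasure 1 = ENNReal.ofReal (Gamma s) := by
  have hpdf : Measurable (exponentialPDF 1) := (measurable_exponentialPDFReal 1).ennreal_ofReal
  have hdensity : (fun x => exponentialPDF 1 x * ENNReal.ofReal (x ^ (s - 1)))
      = (Ici 0).indicator (fun x => ENNReal.ofReal (exp (-x) * x ^ (s - 1))) := by
    funext x
    rcases lt_or_ge x 0 with hx | hx
    · simp [exponentialPDF_of_neg hx, hx]
    · rw [indicator_of_mem (mem_Ici.2 hx), exponentialPDF_of_nonneg hx,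
        ← ENNReal.ofReal_mul (by positivity), one_mul, one_mul]
  have hint : IntegrableOn (fun x => exp (-x) * x ^ (s - 1)) (Ioi 0) := GammaIntegral_convergent hs
  have hexp : expMeasure 1 = volume.withDensity (exponentialPDF 1) := rfl
  rw [hexp, lintegral_withDensity_eq_lintegral_mul _ hpdf (by fun_prop), Pi.mul_def,
    hdensity, lintegral_indicator measurableSet_Ici, setLIntegral_congr Ioi_ae_eq_Ici.symm,
    ← ofReal_integral_eq_lintegral_ofReal hint, Gamma_eq_integral hs]
  filter_upwards [ae_restrict_mem measurableSet_Ioi] with x hx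
  exact mul_nonneg (exp_nonneg _) (rpow_nonneg (le_of_lt hx) _)

lemma expMeasure_prod_real_mul_le_le_rpow_mul_Gamma {δ t : ℝ} (hδ0 : 0 ≤ δ) (hδ1 : δ < 1)
    (ht : 0 < t) :
    ((expMeasure 1).prod (expMeasure 1)).real {p : ℝ × ℝ | p.1 * p.2 ≤ t}
      ≤ t ^ δ * Gamma (1 - δ) := by
  have := isProbabilityMeasure_expMeasure one_pos
  have hsection : ∀ᵐ x ∂expMeasure 1,
      expMeasure 1 (Prod.mk x ⁻¹' {p : ℝ × ℝ | p.1 * p.2 ≤ t})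
        ≤ ENNReal.ofReal (t ^ δ) * ENNReal.ofReal (x ^ (1 - δ - 1)) := by
    filter_upwards [ae_pos_expMeasure one_pos] with x hx
    have hpre : Prod.mk x ⁻¹' {p : ℝ × ℝ | p.1 * p.2 ≤ t} = Iic (t / x) := by
      ext y
      simp only [mem_preimage, mem_ofPred_eq, mem_Iic, le_div_iff₀ hx, mul_comm]
    rw [hpre, expMeasure_Iic one_pos (by positivity), one_mul,
      ← ENNReal.ofReal_mul (by positivity), sub_sub_cancel_left, rpow_neg hx.le,
      ← div_eq_mul_inv, ← div_rpow ht.le hx.le]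
    exact ENNReal.ofReal_le_ofReal (one_sub_exp_neg_le_rpow (by positivity) hδ0 hδ1.le)
  have hmeas : MeasurableSet {p : ℝ × ℝ | p.1 * p.2 ≤ t} :=
    measurableSet_le (by fun_prop) measurable_const
  refine ENNReal.toReal_le_of_le_ofReal (by positivity [Gamma_pos_of_pos (sub_pos.2 hδ1)]) ?_
  calc ((expMeasure 1).prod (expMeasure 1)) {p : ℝ × ℝ | p.1 * p.2 ≤ t}
      ≤ ∫⁻ x, ENNReal.ofReal (t ^ δ) * ENNReal.ofReal (x ^ (1 - δ - 1)) ∂expMeasure 1 := by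
        rw [Measure.prod_apply hmeas]
        exact lintegral_mono_ae hsection
    _ = ENNReal.ofReal (t ^ δ * Gamma (1 - δ)) := by
        rw [lintegral_const_mul _ (by fun_prop), lintegral_rpow_expMeasure_one (sub_pos.2 hδ1),
          ENNReal.ofReal_mul (by positivity)]

end ProbabilityTheory

lemma eventually_const_mul_rpow_le_rpow {a b : ℝ} (hab : a < b) (c : ℝ) :
    ∀ᶠ ρ in atTop, c * ρ ^ a ≤ ρ ^ b := by
  have hdecay : Tendsto (fun ρ : ℝ => c * ρ ^ (-(b - a))) atTop (𝓝 0) := by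
    simpa using (tendsto_rpow_neg_atTop (sub_pos.2 hab)).const_mul c
  filter_upwards [hdecay.eventually (ge_mem_nhds one_pos), eventually_gt_atTop 0] with ρ hρ hρ0
  calc c * ρ ^ a = c * ρ ^ (-(b - a)) * ρ ^ b := by
        rw [mul_assoc, ← rpow_add hρ0]; ring_nf
    _ ≤ 1 * ρ ^ b := by gcongr
    _ = ρ ^ b := one_mul _

theorem tendsto_log_div_log_of_rpow_bounds {f : ℝ → ℝ} {a : ℝ}
    (hlower : ∀ b < a, ∀ᶠ ρ in atTop, ρ ^ b ≤ f ρ)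
    (hupper : ∀ b > a, ∀ᶠ ρ in atTop, f ρ ≤ ρ ^ b) :
    Tendsto (fun ρ => log (f ρ) / log ρ) atTop (𝓝 a) := by
  rw [tendsto_order]
  constructor
  · intro b hb
    obtain ⟨b', hbb', hb'a⟩ := exists_between hb
    filter_upwards [hlower b' hb'a, eventually_gt_atTop 1] with ρ hf hρ
    have hlog : b' * log ρ ≤ log (f ρ) := by
      rw [← log_rpow (by linarith)]
      exact log_le_log (by positivity) hf
    rw [lt_div_iff₀ (log_pos hρ)]
    nlinarith [log_pos hρ]
  · intro b hb
    obtain ⟨b', hab', hb'b⟩ := exists_between hb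
    filter_upwards [hupper b' hab', hlower (a - 1) (by linarith), eventually_gt_atTop 1]
      with ρ hf hpos hρ
    have hlog : log (f ρ) ≤ b' * log ρ := by
      rw [← log_rpow (by linarith)]
      exact log_le_log (lt_of_lt_of_le (by positivity) hpos) hf
    rw [div_lt_iff₀ (log_pos hρ)]
    nlinarith [log_pos hρ]

theorem stmt10_general {Ω : Type*} [MeasurableSpace Ω] (μ : Measure Ω)
    (X Y : Ω → ℝ)
    (hX : Measurable X) (hY : Measurable Y)
    (hXexp : μ.map X = expMeasure 1) (hYexp : μ.map Y = expMeasure 1)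
    (hindep : IndepFun X Y μ) (α : ℝ) (hα : 0 < α) :
    Tendsto
      (fun ρ : ℝ => Real.log ((μ {ω | X ω * Y ω ≤ ρ ^ (-α)}).toReal) / Real.log ρ)
      atTop (nhds (-α)) := by
  have := isProbabilityMeasure_expMeasure one_pos
  have hjoint : μ.map (fun ω => (X ω, Y ω)) = (expMeasure 1).prod (expMeasure 1) := by
    rw [(indepFun_iff_map_prod_eq_prod_map_map' hX.aemeasurable hY.aemeasurable
      (hXexp ▸ inferInstance) (hYexp ▸ inferInstance)).1 hindep, hXexp, hYexp]
  have hlaw : ∀ t : ℝ, (μ {ω | X ω * Y ω ≤ t}).toReal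
      = ((expMeasure 1).prod (expMeasure 1)).real {p : ℝ × ℝ | p.1 * p.2 ≤ t} := fun t => by
    rw [← hjoint,
      map_measureReal_apply (by fun_prop) (measurableSet_le (by fun_prop) (by fun_prop))]
    rfl
  refine tendsto_log_div_log_of_rpow_bounds (fun b hb => ?_) (fun b hb => ?_)
  · filter_upwards [eventually_const_mul_rpow_le_rpow hb 4, eventually_ge_atTop 1] with ρ hρ hρ1
    have hρα : ρ ^ (-α) ≤ 1 := rpow_le_one_of_one_le_of_nonpos hρ1 (by linarith)
    linarith [hlaw (ρ ^ (-α)) ▸ div_four_le_expMeasure_prod_real_mul_le (by positivity) hρα]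
  · obtain ⟨δ, hδ, hδ1⟩ := exists_between (max_lt one_pos ((div_lt_one hα).2 (neg_lt.1 hb)))
    have hδ0 : 0 ≤ δ := (le_max_left _ _).trans hδ.le
    have hδb : -α * δ < b := by
      have := (div_lt_iff₀ hα).1 ((le_max_right _ _).trans_lt hδ)
      linarith
    filter_upwards [eventually_const_mul_rpow_le_rpow hδb (Gamma (1 - δ)), eventually_gt_atTop 0]
      with ρ hρ hρ0
    calc (μ {ω | X ω * Y ω ≤ ρ ^ (-α)}).toReal ≤ (ρ ^ (-α)) ^ δ * Gamma (1 - δ) :=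
          hlaw (ρ ^ (-α)) ▸ expMeasure_prod_real_mul_le_le_rpow_mul_Gamma hδ0 hδ1 (by positivity)
      _ = Gamma (1 - δ) * ρ ^ (-α * δ) := by rw [rpow_mul hρ0.le, mul_comm]
      _ ≤ ρ ^ b := hρ

theorem stmt10 {Ω : Type*} [MeasurableSpace Ω] (μ : Measure Ω)
    [IsProbabilityMeasure μ] (X Y : Ω → ℝ)
    (hX : Measurable X) (hY : Measurable Y)
    (hXexp : μ.map X = expMeasure 1) (hYexp : μ.map Y = expMeasure 1)
    (hindep : IndepFun X Y μ) (α : ℝ) (hα : 0 < α) :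
    Tendsto
      (fun ρ : ℝ => Real.log ((μ {ω | X ω * Y ω ≤ ρ ^ (-α)}).toReal) / Real.log ρ)
      atTop (nhds (-α)) :=
  stmt10_general μ X Y hX hY hXexp hYexp hindep α hα
end

section
/- Let K ≥ 1 and let X_1, …, X_K, Y_1, …, Y_K be mutually independent random variables, each exponentially distributed with rate 1, and let α > 0. Then lim_{ρ→∞} log ℙ[X_i Y_i ≤ ρ^{−α} for all i = 1,…,K] / log ρ = −Kα. -/
/-!
For one pair put `p(t) = ℙ[X Y ≤ t]`. Since `{X ≤ t, Y ≤ 1} ⊆ {X Y ≤ t}`, independence gives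
`p(t) ≥ e⁻² t` for `t ≤ 1`; Markov's inequality for `(X Y)^(-s)`, whose mean is `Γ(1 - s)²`,
gives `p(t) ≤ Γ(1 - s)² t^s` for every `s ∈ [0, 1)`. The `K` pairs are independent, so the
probability of the event is `p(t)^K`, which is squeezed between `e^(-2K) t^K` and
`Γ(1 - s)^(2K) t^(sK)`. Hence `log ℙ / log t → K` as `t → 0⁺`, and `t = ρ^(-α)` gives `-Kα`.
-/

open MeasureTheory ProbabilityTheory Filter Real Topology Set

theorem ProbabilityTheory.iIndepFun.prodMk_sumElim {Ω ι β : Type*} [MeasurableSpace Ω]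
    {μ : Measure Ω} [Fintype ι] [MeasurableSpace β] {f g : ι → Ω → β}
    (hf : ∀ i, Measurable (f i)) (hg : ∀ i, Measurable (g i))
    (h : iIndepFun (Sum.elim f g) μ) :
    iIndepFun (fun i ω ↦ (f i ω, g i ω)) μ := by
  have := h.isProbabilityMeasure
  have hfg : ∀ j, Measurable (Sum.elim f g j) := Sum.rec hf hg
  have hpair : ∀ i, μ.map (fun ω ↦ (f i ω, g i ω)) = (μ.map (f i)).prod (μ.map (g i)) :=
    fun i ↦ (h.indepFun Sum.inl_ne_inr).map_prod_eq_prod_map_map (hf i).aemeasurable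
      (hg i).aemeasurable
  -- The law of the pairs is the image of the product law of all `2 * card ι` variables
  -- under a measure-preserving regrouping of coordinates.
  have hsplit : (fun ω i ↦ (f i ω, g i ω)) =
      (MeasurableEquiv.arrowProdEquivProdArrow β β ι).symm ∘
        MeasurableEquiv.sumPiEquivProdPi (fun _ ↦ β) ∘ fun ω j ↦ Sum.elim f g j ω := by
    ext ω i <;> rfl
  rw [iIndepFun_iff_map_fun_eq_pi_map fun i ↦ ((hf i).prodMk (hg i)).aemeasurable, hsplit,
    ← Measure.map_map (by fun_prop) (by fun_prop),
    ← Measure.map_map (by fun_prop) (by fun_prop),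
    h.map_fun_eq_pi_map fun j ↦ (hfg j).aemeasurable,
    (measurePreserving_sumPiEquivProdPi _).map_eq,
    ((measurePreserving_arrowProdEquivProdArrow β β ι _ _).symm _).map_eq]
  simp_rw [hpair]
  rfl

theorem lintegral_rpow_expMeasure {r a : ℝ} (hr : 0 < r) (ha : 0 < a) :
    ∫⁻ x, ENNReal.ofReal (x ^ (a - 1)) ∂expMeasure r =
      ENNReal.ofReal (Gamma a / r ^ (a - 1)) := by
  have hdens : ∀ x, exponentialPDF r x * ENNReal.ofReal (x ^ (a - 1)) =
      ENNReal.ofReal (Gamma a / r ^ (a - 1)) * gammaPDF a r x := by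
    intro x
    rcases lt_or_ge x 0 with hx | hx
    · simp [exponentialPDF_of_neg hx, gammaPDF_of_neg hx]
    have hΓ := Gamma_pos_of_pos ha
    rw [exponentialPDF_of_nonneg hx, gammaPDF_of_nonneg hx,
      ← ENNReal.ofReal_mul (by positivity), ← ENNReal.ofReal_mul (by positivity)]
    congr 1
    rw [show r ^ a = r ^ (a - 1) * r by rw [← rpow_add_one hr.ne']; ring_nf]
    field_simp
  rw [expMeasure, gammaMeasure, lintegral_withDensity_eq_lintegral_mul _
    (show Measurable (gammaPDF 1 r) from (measurable_gammaPDFReal 1 r).ennreal_ofReal)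
    (by fun_prop)]
  change ∫⁻ x, exponentialPDF r x * ENNReal.ofReal (x ^ (a - 1)) = _
  simp_rw [hdens]
  rw [lintegral_const_mul _
    (show Measurable (gammaPDF a r) from (measurable_gammaPDFReal a r).ennreal_ofReal),
    lintegral_gammaPDF_eq_one ha hr, mul_one]

theorem ae_pos_of_map_eq_expMeasure {Ω : Type*} [MeasurableSpace Ω] {μ : Measure Ω}
    {X : Ω → ℝ} {r : ℝ} (hr : 0 < r) (hX : Measurable X) (hXexp : μ.map X = expMeasure r) :
    ∀ᵐ ω ∂μ, 0 < X ω := by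
  have := isProbabilityMeasure_expMeasure hr
  have h0 : expMeasure r (Iic 0) = 0 := by
    rw [← measureReal_eq_zero_iff, ← cdf_eq_real, cdf_expMeasure_eq hr]
    simp
  have : ∀ᵐ x ∂expMeasure r, 0 < x := by
    rw [ae_iff]; simpa [Set.Iic_def] using h0
  rw [← hXexp] at this
  exact ae_of_ae_map hX.aemeasurable this

theorem measureReal_setOf_le_eq_of_map_eq_expMeasure {Ω : Type*} [MeasurableSpace Ω] {μ : Measure Ω}
    {X : Ω → ℝ} {r : ℝ} (hr : 0 < r) (hX : Measurable X) (hXexp : μ.map X = expMeasure r)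
    {x : ℝ} (hx : 0 ≤ x) :
    μ.real {ω | X ω ≤ x} = 1 - exp (-(r * x)) := by
  have := isProbabilityMeasure_expMeasure hr
  calc μ.real {ω | X ω ≤ x} = (μ.map X).real (Iic x) :=
        (map_measureReal_apply hX measurableSet_Iic).symm
    _ = 1 - exp (-(r * x)) := by rw [hXexp, ← cdf_eq_real, cdf_expMeasure_eq hr, if_pos hx]

theorem mul_exp_neg_one_le_one_sub_exp_neg {x : ℝ} (hx0 : 0 ≤ x) (hx1 : x ≤ 1) :
    x * exp (-1) ≤ 1 - exp (-x) := by
  have h1 : x * exp (-1) ≤ x * exp (-x) := by gcongr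
  have h2 : (x + 1) * exp (-x) ≤ 1 :=
    calc (x + 1) * exp (-x) ≤ exp x * exp (-x) := by gcongr; linarith [add_one_le_exp x]
      _ = 1 := by rw [← exp_add, add_neg_cancel, exp_zero]
  linarith

section ExponentialPair

variable {Ω : Type*} [MeasurableSpace Ω] {μ : Measure Ω} {X Y : Ω → ℝ}

theorem lintegral_rpow_neg_of_map_eq_expMeasure (hX : Measurable X)
    (hXexp : μ.map X = expMeasure 1) {s : ℝ} (hs : s < 1) :
    ∫⁻ ω, ENNReal.ofReal (X ω ^ (-s)) ∂μ = ENNReal.ofReal (Gamma (1 - s)) := by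
  have h := lintegral_rpow_expMeasure one_pos (sub_pos.2 hs)
  rwa [sub_sub_cancel_left, one_rpow, div_one, ← hXexp, lintegral_map (by fun_prop) hX] at h

variable (hX : Measurable X) (hY : Measurable Y)
  (hXexp : μ.map X = expMeasure 1) (hYexp : μ.map Y = expMeasure 1) (hXY : IndepFun X Y μ)
include hX hY hXexp hYexp hXY

theorem exp_neg_two_mul_le_measureReal_mul_le [IsFiniteMeasure μ] {t : ℝ} (ht0 : 0 ≤ t)
    (ht1 : t ≤ 1) : exp (-2) * t ≤ μ.real {ω | X ω * Y ω ≤ t} := by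
  have hsub : (X ⁻¹' Iic t ∩ Y ⁻¹' Iic 1 : Set Ω) ≤ᵐ[μ] {ω | X ω * Y ω ≤ t} := by
    filter_upwards [ae_pos_of_map_eq_expMeasure one_pos hY hYexp] with ω hYω ⟨hXt, hY1⟩
    exact show X ω * Y ω ≤ t by nlinarith [show X ω ≤ t from hXt, show Y ω ≤ 1 from hY1]
  calc exp (-2) * t = (t * exp (-1)) * (1 * exp (-1)) := by
        rw [show (-2 : ℝ) = -1 + -1 by norm_num, exp_add]; ring
    _ ≤ (1 - exp (-t)) * (1 - exp (-1)) :=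
        mul_le_mul (mul_exp_neg_one_le_one_sub_exp_neg ht0 ht1)
          (mul_exp_neg_one_le_one_sub_exp_neg zero_le_one le_rfl) (by positivity)
          (sub_nonneg.2 (exp_le_one_iff.2 (by linarith)))
    _ = μ.real (X ⁻¹' Iic t ∩ Y ⁻¹' Iic 1) := by
        rw [measureReal_def, hXY.measure_inter_preimage_eq_mul _ _ measurableSet_Iic
          measurableSet_Iic, ENNReal.toReal_mul, ← measureReal_def, ← measureReal_def]
        have hXt := measureReal_setOf_le_eq_of_map_eq_expMeasure one_pos hX hXexp ht0
        have hY1 := measureReal_setOf_le_eq_of_map_eq_expMeasure one_pos hY hYexp zero_le_one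
        rw [one_mul] at hXt hY1
        exact congrArg₂ _ hXt.symm hY1.symm
    _ ≤ μ.real {ω | X ω * Y ω ≤ t} :=
        ENNReal.toReal_mono (measure_ne_top _ _) (measure_mono_ae hsub)

theorem measureReal_mul_le_le_Gamma_sq_mul_rpow {s t : ℝ} (hs0 : 0 ≤ s) (hs1 : s < 1)
    (ht : 0 < t) : μ.real {ω | X ω * Y ω ≤ t} ≤ Gamma (1 - s) ^ 2 * t ^ s := by
  have hmono : {ω | X ω * Y ω ≤ t} ≤ᵐ[μ]
      {ω | ENNReal.ofReal (t ^ (-s)) ≤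
        ENNReal.ofReal (X ω ^ (-s)) * ENNReal.ofReal (Y ω ^ (-s))} := by
    filter_upwards [ae_pos_of_map_eq_expMeasure one_pos hX hXexp,
      ae_pos_of_map_eq_expMeasure one_pos hY hYexp] with ω hXω hYω hXYt
    change X ω * Y ω ≤ t at hXYt
    change _ ≤ _
    rw [← ENNReal.ofReal_mul (by positivity), ← mul_rpow hXω.le hYω.le]
    exact ENNReal.ofReal_le_ofReal (rpow_le_rpow_of_nonpos (by positivity) hXYt (by linarith))
  have hmoment := lintegral_mul_eq_lintegral_mul_lintegral_of_indepFun''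
    (by fun_prop : AEMeasurable (fun ω ↦ ENNReal.ofReal (X ω ^ (-s))) μ)
    (by fun_prop : AEMeasurable (fun ω ↦ ENNReal.ofReal (Y ω ^ (-s))) μ)
    (hXY.comp (φ := fun x ↦ ENNReal.ofReal (x ^ (-s))) (ψ := fun x ↦ ENNReal.ofReal (x ^ (-s)))
      (by fun_prop) (by fun_prop))
  rw [lintegral_rpow_neg_of_map_eq_expMeasure hX hXexp hs1,
    lintegral_rpow_neg_of_map_eq_expMeasure hY hYexp hs1] at hmoment
  have hmarkov := (measure_mono_ae hmono).trans (meas_ge_le_lintegral_div (by fun_prop)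
    (by simpa using rpow_pos_of_pos ht (-s)) ENNReal.ofReal_ne_top)
  rw [hmoment, ← ENNReal.ofReal_mul (Gamma_pos_of_pos (sub_pos.2 hs1)).le,
    ← ENNReal.ofReal_div_of_pos (rpow_pos_of_pos ht _), rpow_neg ht.le, div_inv_eq_mul,
    ← sq] at hmarkov
  exact ENNReal.toReal_le_of_le_ofReal (by positivity) hmarkov

end ExponentialPair

theorem log_mul_rpow_div_log {c t : ℝ} (hc : 0 < c) (ht : 0 < t) (hlog : log t ≠ 0) (u : ℝ) :
    log (c * t ^ u) / log t = u + log c / log t := by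
  rw [log_mul hc.ne' (rpow_pos_of_pos ht u).ne', log_rpow ht]
  field_simp
  ring

theorem tendsto_log_div_log_nhdsGT_zero {g : ℝ → ℝ} {c d : ℝ} (hc : 0 < c)
    (hlow : ∀ᶠ t in 𝓝[>] 0, c * t ^ d ≤ g t)
    (hup : ∀ σ ∈ Ioo (0 : ℝ) 1, ∃ C, ∀ᶠ t in 𝓝[>] 0, g t ≤ C * t ^ (σ * d)) :
    Tendsto (fun t ↦ log (g t) / log t) (𝓝[>] 0) (𝓝 d) := by
  have hsmall : ∀ b, Tendsto (fun t ↦ b / log t) (𝓝[>] 0) (𝓝 0) := fun b ↦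
    tendsto_const_nhds.div_atBot tendsto_log_nhdsGT_zero
  have hneg : ∀ᶠ t in 𝓝[>] 0, log t < 0 := tendsto_log_nhdsGT_zero.eventually_lt_atBot 0
  have hpos : ∀ᶠ t in 𝓝[>] (0 : ℝ), 0 < t := self_mem_nhdsWithin
  refine tendsto_order.2 ⟨fun a ha ↦ ?_, fun b hb ↦ ?_⟩
  · obtain ⟨σ, hσ, haσ⟩ : ∃ σ ∈ Ioo (0 : ℝ) 1, a < σ * d :=
      ((Filter.eventually_of_mem (Ioo_mem_nhdsLT zero_lt_one) fun _ h ↦ h).and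
        (((continuous_mul_const d).tendsto' 1 d (one_mul d)).mono_left nhdsWithin_le_nhds
          |>.eventually (lt_mem_nhds ha))).exists
    obtain ⟨C, hC⟩ := hup σ hσ
    filter_upwards [hC, hlow, hneg, hpos,
      (hsmall (log C)).eventually (lt_mem_nhds (sub_neg.2 haσ))] with t hCt hct hlt ht hsmallt
    have hg : 0 < g t := (mul_pos hc (rpow_pos_of_pos ht d)).trans_le hct
    have hC0 : 0 < C := (mul_pos_iff_of_pos_right (rpow_pos_of_pos ht _)).1 (hg.trans_le hCt)
    have := div_le_div_of_nonpos_of_le hlt.le (log_le_log hg hCt)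
    rw [log_mul_rpow_div_log hC0 ht hlt.ne] at this
    linarith
  · filter_upwards [hlow, hneg, hpos, (hsmall (log c)).eventually (gt_mem_nhds (sub_pos.2 hb))]
      with t hct hlt ht hsmallt
    have := div_le_div_of_nonpos_of_le hlt.le
      (log_le_log (mul_pos hc (rpow_pos_of_pos ht d)) hct)
    rw [log_mul_rpow_div_log hc ht hlt.ne] at this
    linarith

section IndependentPairs

variable {Ω ι : Type*} [MeasurableSpace Ω] {μ : Measure Ω} [Fintype ι] {X Y : ι → Ω → ℝ}
  (hX : ∀ i, Measurable (X i)) (hY : ∀ i, Measurable (Y i))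
include hX hY

theorem measureReal_forall_mul_le_eq_prod (hindep : iIndepFun (Sum.elim X Y) μ) (t : ℝ) :
    μ.real {ω | ∀ i, X i ω * Y i ω ≤ t} = ∏ i, μ.real {ω | X i ω * Y i ω ≤ t} := by
  have hZ := (hindep.prodMk_sumElim hX hY).comp (fun _ p ↦ p.1 * p.2)
    fun _ ↦ measurable_fst.mul measurable_snd
  have := hZ.meas_iInter (s := fun i ↦ {ω | X i ω * Y i ω ≤ t})
    fun i ↦ ⟨Iic t, measurableSet_Iic, rfl⟩
  rw [measureReal_def, Set.ofPred_forall, this, ENNReal.toReal_prod]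
  rfl

variable (hXexp : ∀ i, μ.map (X i) = expMeasure 1) (hYexp : ∀ i, μ.map (Y i) = expMeasure 1)
  (hindep : iIndepFun (Sum.elim X Y) μ)
include hXexp hYexp hindep

theorem exp_neg_two_mul_pow_le_measureReal_forall_mul_le {t : ℝ} (ht0 : 0 ≤ t) (ht1 : t ≤ 1) :
    (exp (-2) * t) ^ Fintype.card ι ≤ μ.real {ω | ∀ i, X i ω * Y i ω ≤ t} := by
  have := hindep.isProbabilityMeasure
  rw [measureReal_forall_mul_le_eq_prod hX hY hindep, ← Finset.card_univ, ← Finset.prod_const]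
  exact Finset.prod_le_prod (fun _ _ ↦ by positivity) fun i _ ↦
    exp_neg_two_mul_le_measureReal_mul_le (hX i) (hY i) (hXexp i) (hYexp i)
      (hindep.indepFun Sum.inl_ne_inr) ht0 ht1

theorem measureReal_forall_mul_le_le_Gamma_sq_mul_rpow_pow {s t : ℝ} (hs0 : 0 ≤ s)
    (hs1 : s < 1) (ht : 0 < t) :
    μ.real {ω | ∀ i, X i ω * Y i ω ≤ t} ≤ (Gamma (1 - s) ^ 2 * t ^ s) ^ Fintype.card ι := by
  rw [measureReal_forall_mul_le_eq_prod hX hY hindep, ← Finset.card_univ, ← Finset.prod_const]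
  exact Finset.prod_le_prod (fun _ _ ↦ measureReal_nonneg) fun i _ ↦
    measureReal_mul_le_le_Gamma_sq_mul_rpow (hX i) (hY i) (hXexp i) (hYexp i)
      (hindep.indepFun Sum.inl_ne_inr) hs0 hs1 ht

end IndependentPairs

theorem stmt11_general {Ω : Type*} [MeasurableSpace Ω] (μ : Measure Ω)
    (K : ℕ)
    (X Y : Fin K → Ω → ℝ)
    (hX : ∀ i, Measurable (X i)) (hY : ∀ i, Measurable (Y i))
    (hXexp : ∀ i, μ.map (X i) = expMeasure 1)
    (hYexp : ∀ i, μ.map (Y i) = expMeasure 1)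
    (hindep : iIndepFun (m := fun _ : Fin K ⊕ Fin K => (inferInstance : MeasurableSpace ℝ))
      (Sum.elim X Y) μ)
    (α : ℝ) (hα : 0 < α) :
    Tendsto
      (fun ρ : ℝ =>
        Real.log ((μ {ω | ∀ i, X i ω * Y i ω ≤ ρ ^ (-α)}).toReal) / Real.log ρ)
      atTop (nhds (-((K : ℝ) * α))) := by
  have hlow : ∀ᶠ t in 𝓝[>] 0,
      exp (-2) ^ K * t ^ (K : ℝ) ≤ μ.real {ω | ∀ i, X i ω * Y i ω ≤ t} := by
    filter_upwards [Ioc_mem_nhdsGT zero_lt_one] with t ht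
    rw [rpow_natCast, ← mul_pow]
    simpa using exp_neg_two_mul_pow_le_measureReal_forall_mul_le hX hY hXexp hYexp hindep
      ht.1.le ht.2
  have hup : ∀ σ ∈ Ioo (0 : ℝ) 1, ∃ C, ∀ᶠ t in 𝓝[>] 0,
      μ.real {ω | ∀ i, X i ω * Y i ω ≤ t} ≤ C * t ^ (σ * K) := by
    refine fun σ hσ ↦ ⟨(Gamma (1 - σ) ^ 2) ^ K, ?_⟩
    filter_upwards [self_mem_nhdsWithin] with t (ht : 0 < t)
    rw [rpow_mul_natCast ht.le, ← mul_pow]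
    simpa using measureReal_forall_mul_le_le_Gamma_sq_mul_rpow_pow hX hY hXexp hYexp hindep
      hσ.1.le hσ.2 ht
  have hρ : Tendsto (fun ρ : ℝ ↦ ρ ^ (-α)) atTop (𝓝[>] 0) :=
    tendsto_nhdsWithin_iff.2 ⟨tendsto_rpow_neg_atTop hα,
      (eventually_gt_atTop 0).mono fun ρ hρ ↦ rpow_pos_of_pos hρ _⟩
  have hlim :=
    ((tendsto_log_div_log_nhdsGT_zero (by positivity) hlow hup).comp hρ).const_mul (-α)
  rw [show -α * K = -(K * α) by ring] at hlim
  refine hlim.congr' ?_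
  filter_upwards [eventually_gt_atTop 1] with ρ hρ
  simp only [Function.comp, log_rpow (zero_lt_one.trans hρ)]
  field_simp [(log_pos hρ).ne']
  rfl

theorem stmt11 {Ω : Type*} [MeasurableSpace Ω] (μ : Measure Ω)
    [IsProbabilityMeasure μ] (K : ℕ) (hK : 1 ≤ K)
    (X Y : Fin K → Ω → ℝ)
    (hX : ∀ i, Measurable (X i)) (hY : ∀ i, Measurable (Y i))
    (hXexp : ∀ i, μ.map (X i) = expMeasure 1)
    (hYexp : ∀ i, μ.map (Y i) = expMeasure 1)
    (hindep : iIndepFun (m := fun _ : Fin K ⊕ Fin K => (inferInstance : MeasurableSpace ℝ))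
      (Sum.elim X Y) μ)
    (α : ℝ) (hα : 0 < α) :
    Tendsto
      (fun ρ : ℝ =>
        Real.log ((μ {ω | ∀ i, X i ω * Y i ω ≤ ρ ^ (-α)}).toReal) / Real.log ρ)
      atTop (nhds (-((K : ℝ) * α))) :=
  stmt11_general μ K X Y hX hY hXexp hYexp hindep α hα
end
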